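/- Suppose the desired powers satisfy (1/N) Σ_{i=1}^N P_d(i) → P̄_in, the harvested powers satisfy (1/N) Σ_{i=1}^N P_in(i) → P̄_in, and P_d is uniformly bounded. If it were the case that lim (1/N) Σ_{i=1}^N P_out(i) = L < P̄_in, then B(N) = Σ_{i≤N}(P_in(i) − P_out(i)) would grow linearly, so B(N) → ∞, which forces P_out(i) = P_d(i) eventually and hence lim (1/N) Σ P_out(i) = P̄_in, a contradiction. Therefore lim_{N→∞} (1/N) Σ_{i=1}^N P_out(i) = P̄_in. -/
import Mathlib


open Filter

def battery (Pin Pd : ℕ → ℝ) : ℕ → ℝ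
  | 0 => 0
  | i + 1 => battery Pin Pd i + Pin (i + 1) - min (battery Pin Pd i) (Pd (i + 1))

noncomputable def Pout (Pin Pd : ℕ → ℝ) (i : ℕ) : ℝ :=
  min (battery Pin Pd (i - 1)) (Pd i)

noncomputable def dsum (Pin Pd : ℕ → ℝ) (N : ℕ) : ℝ :=
  ∑ i ∈ Finset.Icc 1 N, (Pin i - Pd i)

noncomputable def msum (Pin Pd : ℕ → ℝ) : ℕ → ℝ
  | 0 => 0
  | N + 1 => min (msum Pin Pd N) (dsum Pin Pd (N + 1))

lemma msum_le_dsum (Pin Pd : ℕ → ℝ) : ∀ N, msum Pin Pd N ≤ dsum Pin Pd N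
  | 0 => by simp [msum, dsum]
  | N + 1 => min_le_right _ _

lemma msum_nonpos (Pin Pd : ℕ → ℝ) : ∀ N, msum Pin Pd N ≤ 0
  | 0 => le_refl _
  | N + 1 => le_trans (min_le_left _ _) (msum_nonpos Pin Pd N)

lemma battery_nonneg (Pin Pd : ℕ → ℝ) (hPin : ∀ i, 0 ≤ Pin i) :
    ∀ N, 0 ≤ battery Pin Pd N
  | 0 => le_refl _
  | N + 1 => by
      have h := min_le_left (battery Pin Pd N) (Pd (N + 1))
      have := hPin (N + 1)
      show 0 ≤ battery Pin Pd N + Pin (N + 1) - min (battery Pin Pd N) (Pd (N + 1))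
      linarith

lemma battery_eq_sum (Pin Pd : ℕ → ℝ) (N : ℕ) :
    battery Pin Pd N = ∑ i ∈ Finset.Icc 1 N, (Pin i - Pout Pin Pd i) := by
  induction N with
  | zero => simp [battery]
  | succ n ih =>
    rw [Finset.sum_Icc_succ_top (by omega : 1 ≤ n + 1), ← ih]
    show battery Pin Pd n + Pin (n + 1) - min (battery Pin Pd n) (Pd (n + 1)) = _
    simp [Pout]
    ring

lemma battery_key (Pin Pd : ℕ → ℝ) (C : ℝ) (hPin : ∀ i, 0 ≤ Pin i)
    (hPd0 : ∀ i, 0 ≤ Pd i) (hPdC : ∀ i, Pd i ≤ C) :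
    ∀ N, battery Pin Pd N ≤ 2 * C + dsum Pin Pd N - msum Pin Pd N := by
  have hC : 0 ≤ C := le_trans (hPd0 0) (hPdC 0)
  intro N
  induction N with
  | zero => simp [battery, dsum, msum]; linarith
  | succ n ih =>
    have hd : dsum Pin Pd (n + 1) = dsum Pin Pd n + (Pin (n + 1) - Pd (n + 1)) :=
      Finset.sum_Icc_succ_top (by omega) _
    have hm1 : msum Pin Pd (n + 1) ≤ msum Pin Pd n := min_le_left _ _
    have hmd : msum Pin Pd n ≤ dsum Pin Pd n := msum_le_dsum Pin Pd n
    have hB1 : battery Pin Pd (n + 1)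
        = battery Pin Pd n + Pin (n + 1) - min (battery Pin Pd n) (Pd (n + 1)) := rfl
    rcases le_or_gt C (battery Pin Pd n) with h | h
    · rw [min_eq_right (le_trans (hPdC _) h)] at hB1
      linarith
    · have hmin : 0 ≤ min (battery Pin Pd n) (Pd (n + 1)) :=
        le_min (battery_nonneg Pin Pd hPin n) (hPd0 _)
      have := hPdC (n + 1)
      linarith

lemma msum_tendsto (Pin Pd : ℕ → ℝ)
    (hD : Tendsto (fun N : ℕ => (N : ℝ)⁻¹ * dsum Pin Pd N) atTop (nhds 0)) :
    Tendsto (fun N : ℕ => (N : ℝ)⁻¹ * msum Pin Pd N) atTop (nhds 0) := by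
  rw [Metric.tendsto_atTop] at hD ⊢
  intro ε hε
  obtain ⟨K, hK⟩ := hD (ε / 2) (by linarith)
  set K1 := max K 1 with hK1
  have hdn : ∀ n, K1 ≤ n → (n : ℝ) * (-(ε / 2)) ≤ dsum Pin Pd n := by
    intro n hn
    have h1 : (1 : ℕ) ≤ n := le_trans (le_max_right K 1) hn
    have hpos : (0 : ℝ) < n := by exact_mod_cast h1
    have h2 := hK n (le_trans (le_max_left K 1) hn)
    rw [Real.dist_eq, sub_zero] at h2
    have h3 : -(ε / 2) < (n : ℝ)⁻¹ * dsum Pin Pd n := neg_lt_of_abs_lt h2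
    have h4 := mul_lt_mul_of_pos_left h3 hpos
    rw [← mul_assoc, mul_inv_cancel₀ (ne_of_gt hpos), one_mul] at h4
    linarith
  have hlow : ∀ n, K1 ≤ n →
      min (msum Pin Pd K1) ((n : ℝ) * (-(ε / 2))) ≤ msum Pin Pd n := by
    intro n hn
    induction n, hn using Nat.le_induction with
    | base => exact min_le_left _ _
    | succ n hn ih =>
      show min _ _ ≤ min (msum Pin Pd n) (dsum Pin Pd (n + 1))
      apply le_min
      · refine le_trans (min_le_min (le_refl _) ?_) ih
        have : (0 : ℝ) ≤ ε / 2 := by linarith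
        have hcast : (n : ℝ) ≤ ((n + 1 : ℕ) : ℝ) := by push_cast; linarith
        nlinarith
      · refine le_trans (min_le_right _ _) ?_
        exact hdn (n + 1) (by omega)
  obtain ⟨N0, hN0⟩ := exists_nat_gt ((-msum Pin Pd K1) / ε + K1 + 1)
  refine ⟨N0, fun N hN => ?_⟩
  have hNK1 : K1 ≤ N := by
    have hK1r : (K1 : ℝ) ≤ ((-msum Pin Pd K1) / ε + K1 + 1) := by
      have : 0 ≤ -msum Pin Pd K1 := by linarith [msum_nonpos Pin Pd K1]
      have : 0 ≤ (-msum Pin Pd K1) / ε := div_nonneg this (le_of_lt hε)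
      linarith
    have : (K1 : ℝ) < N := lt_of_le_of_lt hK1r (lt_of_lt_of_le hN0 (by exact_mod_cast hN))
    exact_mod_cast le_of_lt this
  have hNpos : (0 : ℝ) < N := by
    have : (1 : ℕ) ≤ N := le_trans (le_max_right K 1) hNK1
    exact_mod_cast this
  have hNbig : -msum Pin Pd K1 < ε * N := by
    have h5 : ((-msum Pin Pd K1) / ε) < N := by
      have : ((-msum Pin Pd K1) / ε + K1 + 1 : ℝ) < N :=
        lt_of_lt_of_le hN0 (by exact_mod_cast hN)
      have hK1nn : (0 : ℝ) ≤ K1 := Nat.cast_nonneg _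
      linarith
    calc -msum Pin Pd K1 = ((-msum Pin Pd K1) / ε) * ε := by field_simp
    _ < (N : ℝ) * ε := by
        apply mul_lt_mul_of_pos_right h5 hε
    _ = ε * N := mul_comm _ _
  have hlowN := hlow N hNK1
  have hmN : -msum Pin Pd N < ε * N := by
    rcases le_total (msum Pin Pd K1) ((N : ℝ) * (-(ε / 2))) with h | h
    · rw [min_eq_left h] at hlowN; linarith
    · rw [min_eq_right h] at hlowN; nlinarith
  rw [Real.dist_eq, sub_zero,
    abs_of_nonpos (mul_nonpos_of_nonneg_of_nonpos (inv_nonneg.mpr (le_of_lt hNpos))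
      (msum_nonpos Pin Pd N))]
  have hinv : (0 : ℝ) < (N : ℝ)⁻¹ := inv_pos.mpr hNpos
  have h6 := mul_lt_mul_of_pos_left hmN hinv
  have h7 : (N : ℝ)⁻¹ * (ε * N) = ε := by field_simp
  rw [h7] at h6
  linarith

/-- Core argument of Theorem 2 (deterministic setting): if the Cesàro means of both the
harvested and the bounded desired powers converge to `P̄_in`, then the Cesàro mean of the
actually extracted powers also converges to `P̄_in`. -/
theorem average_pout_tendsto_average_harvested (Pin Pd : ℕ → ℝ) (C PbarIn : ℝ)
    (hPin : ∀ i, 0 ≤ Pin i) (hPd0 : ∀ i, 0 ≤ Pd i) (hPdC : ∀ i, Pd i ≤ C)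
    (hPd : Tendsto (fun N : ℕ => (N : ℝ)⁻¹ * ∑ i ∈ Finset.Icc 1 N, Pd i)
      atTop (nhds PbarIn))
    (hIn : Tendsto (fun N : ℕ => (N : ℝ)⁻¹ * ∑ i ∈ Finset.Icc 1 N, Pin i)
      atTop (nhds PbarIn)) :
    Tendsto (fun N : ℕ => (N : ℝ)⁻¹ * ∑ i ∈ Finset.Icc 1 N, Pout Pin Pd i)
      atTop (nhds PbarIn) := by
  have hD : Tendsto (fun N : ℕ => (N : ℝ)⁻¹ * dsum Pin Pd N) atTop (nhds 0) := by
    have h := hIn.sub hPd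
    rw [sub_self] at h
    refine h.congr fun N => ?_
    simp [dsum, Finset.sum_sub_distrib, mul_sub]
  have hM := msum_tendsto Pin Pd hD
  have hinv : Tendsto (fun N : ℕ => (N : ℝ)⁻¹) atTop (nhds 0) :=
    tendsto_inv_atTop_nhds_zero_nat
  have hup : Tendsto (fun N : ℕ => (N : ℝ)⁻¹ * (2 * C) + (N : ℝ)⁻¹ * dsum Pin Pd N
      - (N : ℝ)⁻¹ * msum Pin Pd N) atTop (nhds 0) := by
    have h1 := (hinv.mul_const (2 * C)).add hD
    have h2 := h1.sub hM
    simpa using h2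
  have hB : Tendsto (fun N : ℕ => (N : ℝ)⁻¹ * battery Pin Pd N) atTop (nhds 0) := by
    refine tendsto_of_tendsto_of_tendsto_of_le_of_le tendsto_const_nhds hup ?_ ?_
    · intro N
      exact mul_nonneg (inv_nonneg.mpr (Nat.cast_nonneg _)) (battery_nonneg Pin Pd hPin N)
    · intro N
      have h := battery_key Pin Pd C hPin hPd0 hPdC N
      have hNnn : (0 : ℝ) ≤ (N : ℝ)⁻¹ := inv_nonneg.mpr (Nat.cast_nonneg _)
      have := mul_le_mul_of_nonneg_left h hNnn
      calc (N : ℝ)⁻¹ * battery Pin Pd N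
          ≤ (N : ℝ)⁻¹ * (2 * C + dsum Pin Pd N - msum Pin Pd N) := this
        _ = _ := by ring
  have h := hIn.sub hB
  rw [sub_zero] at h
  refine h.congr fun N => ?_
  rw [battery_eq_sum, Finset.sum_sub_distrib]
  ring
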